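/- Frobenius discrepancy change identity for the rank-one GROUSE update: Let 0 < d < n, let Ū and U_t be n×d matrices with orthonormal columns, let x ∈ ℝⁿ, and set w = U_tᵀ x, p = U_t w, r = x − p, assuming w ≠ 0, p ≠ 0, r ≠ 0. For any angle θ, let u = cos(θ) p/‖p‖ + sin(θ) r/‖r‖ and U_{t+1} = U_t + (u − p/‖p‖) wᵀ/‖w‖. Then ‖Ūᵀ U_{t+1}‖_F² − ‖Ūᵀ U_t‖_F² = ‖Ū Ūᵀ u‖² − ‖Ū Ūᵀ p‖²/‖p‖²; equivalently, ε_t − ε_{t+1} = ‖Ū Ūᵀ y‖²/‖y‖² − ‖Ū Ūᵀ p‖²/‖p‖² for any y with y/‖y‖ = u, where ε_t := d − ‖Ūᵀ U_t‖_F². -/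

import Mathlib

open Matrix

noncomputable def vnorm {m : Type*} [Fintype m] (x : m → ℝ) : ℝ :=
  Real.sqrt (∑ i, x i ^ 2)

/-- `U` has orthonormal columns. -/
def OrthonormalCols {n d : ℕ} (U : Matrix (Fin n) (Fin d) ℝ) : Prop :=
  Uᵀ * U = 1

/-- Frobenius norm discrepancy `ε = d − ‖Ūᵀ U‖_F²`. -/
noncomputable def epsDisc {n d : ℕ} (Ub U : Matrix (Fin n) (Fin d) ℝ) : ℝ :=
  (d : ℝ) - ∑ i, ∑ j, ((Ubᵀ * U) i j) ^ 2

/-!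
Write `p̂ = p/‖p‖` and `b = w/‖w‖`. Since `U` is an isometry, `‖p‖ = ‖w‖`, so `b` is a unit
vector with `U b = p̂`, and the update is `U⁺ = U + (u - p̂) bᵀ`. Expanding the square of a
rank-one perturbation, `‖A U⁺‖_F² - ‖A U‖_F² = 2 ⟨A(u - p̂), A p̂⟩ + ‖A(u - p̂)‖² = ‖A u‖² - ‖A p̂‖²`
for any matrix `A`; with `A = Ūᵀ` and `‖Ū z‖ = ‖z‖` this is the identity.
-/

section RankOneUpdate

variable {l m k R : Type*} [Fintype l] [Fintype m] [Fintype k] [CommRing R]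

lemma sum_sq_add_vecMulVec (M : Matrix l k R) (a : l → R) (b : k → R) :
    ∑ i, ∑ j, (M + vecMulVec a b) i j ^ 2
      = ∑ i, ∑ j, M i j ^ 2 + 2 * (a ⬝ᵥ M *ᵥ b) + (a ⬝ᵥ a) * (b ⬝ᵥ b) := by
  rw [dotProduct, dotProduct, dotProduct, Finset.sum_mul_sum]
  simp only [mulVec, dotProduct, Finset.mul_sum, ← Finset.sum_add_distrib]
  exact Finset.sum_congr rfl fun i _ => Finset.sum_congr rfl fun j _ => by
    rw [Matrix.add_apply, vecMulVec_apply]; ring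

lemma sum_sq_mul_add_vecMulVec_sub_sum_sq (A : Matrix l m R) (U : Matrix m k R)
    (u q : m → R) {b : k → R} (hUb : U *ᵥ b = q) (hb : b ⬝ᵥ b = 1) :
    ∑ i, ∑ j, (A * (U + vecMulVec (u - q) b)) i j ^ 2 - ∑ i, ∑ j, (A * U) i j ^ 2
      = (A *ᵥ u) ⬝ᵥ (A *ᵥ u) - (A *ᵥ q) ⬝ᵥ (A *ᵥ q) := by
  rw [Matrix.mul_add, mul_vecMulVec, sum_sq_add_vecMulVec, ← mulVec_mulVec, hUb, hb, mulVec_sub]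
  simp only [sub_dotProduct, dotProduct_sub, dotProduct_comm (A *ᵥ q) (A *ᵥ u)]
  ring

end RankOneUpdate

section Vnorm

variable {m : Type*} [Fintype m]

lemma vnorm_eq_sqrt_dotProduct (x : m → ℝ) : vnorm x = √(x ⬝ᵥ x) := by
  simp only [vnorm, dotProduct, sq]

lemma vnorm_sq (x : m → ℝ) : vnorm x ^ 2 = x ⬝ᵥ x := by
  rw [vnorm_eq_sqrt_dotProduct, Real.sq_sqrt]
  exact Finset.sum_nonneg fun i _ => mul_self_nonneg (x i)

lemma vnorm_ne_zero {x : m → ℝ} (hx : x ≠ 0) : vnorm x ≠ 0 := by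
  rw [← pow_ne_zero_iff two_ne_zero, vnorm_sq]
  exact dotProduct_self_eq_zero.not.mpr hx

lemma vnorm_sq_smul (c : ℝ) (x : m → ℝ) : vnorm (c • x) ^ 2 = c ^ 2 * vnorm x ^ 2 := by
  rw [vnorm_sq, vnorm_sq, smul_dotProduct, dotProduct_smul, smul_eq_mul, smul_eq_mul, sq, mul_assoc]

lemma dotProduct_inv_vnorm_smul_self {x : m → ℝ} (hx : x ≠ 0) :
    ((vnorm x)⁻¹ • x) ⬝ᵥ ((vnorm x)⁻¹ • x) = 1 := by
  rw [← vnorm_sq, vnorm_sq_smul, inv_pow, inv_mul_cancel₀ (pow_ne_zero 2 (vnorm_ne_zero hx))]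

end Vnorm

namespace OrthonormalCols

variable {n d : ℕ} {U : Matrix (Fin n) (Fin d) ℝ}

lemma mulVec_dotProduct_mulVec (hU : OrthonormalCols U) (x y : Fin d → ℝ) :
    (U *ᵥ x) ⬝ᵥ (U *ᵥ y) = x ⬝ᵥ y := by
  rw [dotProduct_mulVec, ← mulVec_transpose, mulVec_mulVec, hU, one_mulVec]

lemma vnorm_mulVec (hU : OrthonormalCols U) (x : Fin d → ℝ) : vnorm (U *ᵥ x) = vnorm x := by
  rw [vnorm_eq_sqrt_dotProduct, vnorm_eq_sqrt_dotProduct, hU.mulVec_dotProduct_mulVec]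

end OrthonormalCols

theorem eps_change_identity_general {n d : ℕ}
    (Ub U : Matrix (Fin n) (Fin d) ℝ)
    (hUb : OrthonormalCols Ub) (hU : OrthonormalCols U)
    (w : Fin d → ℝ) (p : Fin n → ℝ)
    (hp : p = U *ᵥ w)
    (hwne : w ≠ 0)
    (u : Fin n → ℝ)
    (Unext : Matrix (Fin n) (Fin d) ℝ)
    (hUnext : Unext = U + Matrix.of (fun i j => (u i - p i / vnorm p) * (w j / vnorm w))) :
    ((∑ i, ∑ j, ((Ubᵀ * Unext) i j) ^ 2) - ∑ i, ∑ j, ((Ubᵀ * U) i j) ^ 2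
      = vnorm (Ub *ᵥ (Ubᵀ *ᵥ u)) ^ 2 - vnorm (Ub *ᵥ (Ubᵀ *ᵥ p)) ^ 2 / vnorm p ^ 2) ∧
    (∀ y : Fin n → ℝ, y ≠ 0 → (fun i => y i / vnorm y) = u →
      epsDisc Ub U - epsDisc Ub Unext
        = vnorm (Ub *ᵥ (Ubᵀ *ᵥ y)) ^ 2 / vnorm y ^ 2
          - vnorm (Ub *ᵥ (Ubᵀ *ᵥ p)) ^ 2 / vnorm p ^ 2) := by
  have hnorm_p : vnorm p = vnorm w := by rw [hp, hU.vnorm_mulVec]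
  have proj_sq_div (z : Fin n → ℝ) :
      vnorm (Ub *ᵥ (Ubᵀ *ᵥ z)) ^ 2 / vnorm z ^ 2
        = vnorm (Ub *ᵥ (Ubᵀ *ᵥ ((vnorm z)⁻¹ • z))) ^ 2 := by
    rw [mulVec_smul, mulVec_smul, vnorm_sq_smul, inv_pow, inv_mul_eq_div]
  have hUnext' : Unext = U + vecMulVec (u - (vnorm p)⁻¹ • p) ((vnorm w)⁻¹ • w) := by
    ext i j
    simp only [hUnext, Matrix.add_apply, of_apply, vecMulVec_apply, Pi.sub_apply, Pi.smul_apply,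
      smul_eq_mul, div_eq_inv_mul]
  have frob_change : ((∑ i, ∑ j, ((Ubᵀ * Unext) i j) ^ 2) - ∑ i, ∑ j, ((Ubᵀ * U) i j) ^ 2
      = vnorm (Ub *ᵥ (Ubᵀ *ᵥ u)) ^ 2 - vnorm (Ub *ᵥ (Ubᵀ *ᵥ p)) ^ 2 / vnorm p ^ 2) := by
    rw [hUnext', sum_sq_mul_add_vecMulVec_sub_sum_sq _ _ _ _
      (by rw [mulVec_smul, ← hp, hnorm_p]) (dotProduct_inv_vnorm_smul_self hwne),
      proj_sq_div, hUb.vnorm_mulVec, hUb.vnorm_mulVec, vnorm_sq, vnorm_sq]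
  refine ⟨frob_change, fun y _ hyu => ?_⟩
  have hu : u = (vnorm y)⁻¹ • y := by
    rw [← hyu]
    ext i
    simp [div_eq_inv_mul]
  rw [proj_sq_div y, ← hu, ← frob_change]
  unfold epsDisc
  ring

/-- **Frobenius discrepancy change identity for the rank-one GROUSE update.**
With `w = Uᵀ x ≠ 0`, `p = U w ≠ 0`, `r = x − p ≠ 0`, any angle `θ`,
`u = cos θ · p/‖p‖ + sin θ · r/‖r‖`, and
`U⁺ = U + (u − p/‖p‖) wᵀ/‖w‖`, we have
`‖Ūᵀ U⁺‖_F² − ‖Ūᵀ U‖_F² = ‖Ū Ūᵀ u‖² − ‖Ū Ūᵀ p‖²/‖p‖²`; equivalently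
`ε_t − ε_{t+1} = ‖Ū Ūᵀ y‖²/‖y‖² − ‖Ū Ūᵀ p‖²/‖p‖²` for any `y ≠ 0` with `y/‖y‖ = u`. -/
theorem eps_change_identity {n d : ℕ} (hd : 0 < d) (hdn : d < n)
    (Ub U : Matrix (Fin n) (Fin d) ℝ)
    (hUb : OrthonormalCols Ub) (hU : OrthonormalCols U)
    (x : Fin n → ℝ) (w : Fin d → ℝ) (p r : Fin n → ℝ)
    (hw : w = Uᵀ *ᵥ x) (hp : p = U *ᵥ w) (hr : r = x - p)
    (hwne : w ≠ 0) (hpne : p ≠ 0) (hrne : r ≠ 0)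
    (θ : ℝ) (u : Fin n → ℝ)
    (hu : u = fun i => Real.cos θ * (p i / vnorm p) + Real.sin θ * (r i / vnorm r))
    (Unext : Matrix (Fin n) (Fin d) ℝ)
    (hUnext : Unext = U + Matrix.of (fun i j => (u i - p i / vnorm p) * (w j / vnorm w))) :
    ((∑ i, ∑ j, ((Ubᵀ * Unext) i j) ^ 2) - ∑ i, ∑ j, ((Ubᵀ * U) i j) ^ 2
      = vnorm (Ub *ᵥ (Ubᵀ *ᵥ u)) ^ 2 - vnorm (Ub *ᵥ (Ubᵀ *ᵥ p)) ^ 2 / vnorm p ^ 2) ∧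
    (∀ y : Fin n → ℝ, y ≠ 0 → (fun i => y i / vnorm y) = u →
      epsDisc Ub U - epsDisc Ub Unext
        = vnorm (Ub *ᵥ (Ubᵀ *ᵥ y)) ^ 2 / vnorm y ^ 2
          - vnorm (Ub *ᵥ (Ubᵀ *ᵥ p)) ^ 2 / vnorm p ^ 2) :=
  eps_change_identity_general Ub U hUb hU w p hp hwne u Unext hUnext
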